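/- Suppose λ' is a 2×2 symmetric positive definite matrix-valued function on (-1,1) of the form λ'₁₁ = ((r²(1-x))/2)e^{2V₁}, λ'₂₂ = ((r²(1+x))/2)e^{-2V₁}, λ'₁₂ = 0 with V₁ constant, and suppose α is a 2×2 integer matrix with det α = ±1 such that αᵗ σ α is diagonal with σ = (r²/2)diag(1-x, 1+x) and (α σ αᵗ)₁₂ = 0 for all x ∈ (-1,1), and the ratio log((α₁ σ α₁ᵗ)/(α₂ σ α₂ᵗ)) ± log((1+x)/(1-x)) is constant in x. Then α is, up to signs and swap, the identity; i.e., no nontrivial integer unimodular change of basis is compatible with these conditions. -/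

import Mathlib

/-! The off-diagonal entry of `α σ(x) αᵗ` is `(r²/2)(α₀₀α₁₀(1-x) + α₀₁α₁₁(1+x))`, affine in `x`;
vanishing on `(-1,1)` forces `α₀₀α₁₀ = α₀₁α₁₁ = 0`, and a unimodular integer matrix with both
column products zero is a signed permutation matrix. -/

open Set Matrix

/-- The Gram matrix `σ(x) = (r²/2) diag(1-x, 1+x)`. -/
noncomputable def sigMat (r x : ℝ) : Matrix (Fin 2) (Fin 2) ℝ :=
  Matrix.diagonal ![r ^ 2 / 2 * (1 - x), r ^ 2 / 2 * (1 + x)]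

/-- The Gram matrix in the transformed basis, `α σ(x) αᵗ`. -/
noncomputable def gramE (r : ℝ) (α : Matrix (Fin 2) (Fin 2) ℤ) (x : ℝ) :
    Matrix (Fin 2) (Fin 2) ℝ :=
  (α.map (Int.cast : ℤ → ℝ)) * sigMat r x * (α.map (Int.cast : ℤ → ℝ))ᵀ

theorem gramE_zero_one (r : ℝ) (α : Matrix (Fin 2) (Fin 2) ℤ) (x : ℝ) :
    gramE r α x 0 1 =
      r ^ 2 / 2 * (((α 0 0 * α 1 0 : ℤ) : ℝ) * (1 - x) + ((α 0 1 * α 1 1 : ℤ) : ℝ) * (1 + x)) := by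
  simp only [gramE, sigMat, mul_apply, map_apply, Fin.sum_univ_two, transpose_apply,
    diagonal_apply_eq, diagonal_apply_ne, ne_eq, one_ne_zero, zero_ne_one, not_false_eq_true,
    cons_val_zero, cons_val_one, cons_val_fin_one, mul_zero, add_zero, zero_add, Int.cast_mul]
  ring

theorem eq_zero_of_affine_eq_zero_on_Ioo {a b : ℝ}
    (h : ∀ x ∈ Ioo (-1 : ℝ) 1, a * (1 - x) + b * (1 + x) = 0) : a = 0 ∧ b = 0 := by
  have h₀ := h 0 (by norm_num)
  have h₁ := h (1 / 2) (by norm_num)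
  constructor <;> linarith

theorem Matrix.fin_two_signed_perm_of_isUnit_det {R : Type*} [CommRing R] [IsDomain R]
    {α : Matrix (Fin 2) (Fin 2) R}
    (hdet : IsUnit α.det) (h₀ : α 0 0 * α 1 0 = 0) (h₁ : α 0 1 * α 1 1 = 0) :
    (α 0 1 = 0 ∧ α 1 0 = 0 ∧ IsUnit (α 0 0) ∧ IsUnit (α 1 1)) ∨
    (α 0 0 = 0 ∧ α 1 1 = 0 ∧ IsUnit (α 0 1) ∧ IsUnit (α 1 0)) := by
  rw [det_fin_two] at hdet
  rcases mul_eq_zero.mp h₀ with ha | hc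
  · rw [ha, zero_mul, zero_sub, IsUnit.neg_iff, IsUnit.mul_iff] at hdet
    exact Or.inr ⟨ha, (mul_eq_zero.mp h₁).resolve_left hdet.1.ne_zero, hdet⟩
  · rw [hc, mul_zero, sub_zero, IsUnit.mul_iff] at hdet
    exact Or.inl ⟨(mul_eq_zero.mp h₁).resolve_right hdet.2.ne_zero, hc, hdet⟩

theorem orbit_space_rigidity_general (r : ℝ) (hr : 0 < r) (α : Matrix (Fin 2) (Fin 2) ℤ)
    (hunimod : α.det = 1 ∨ α.det = -1)
    (hdiag : ∀ x ∈ Ioo (-1 : ℝ) 1, gramE r α x 0 1 = 0) :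
    (α 0 1 = 0 ∧ α 1 0 = 0 ∧ (α 0 0 = 1 ∨ α 0 0 = -1) ∧ (α 1 1 = 1 ∨ α 1 1 = -1)) ∨
    (α 0 0 = 0 ∧ α 1 1 = 0 ∧ (α 0 1 = 1 ∨ α 0 1 = -1) ∧ (α 1 0 = 1 ∨ α 1 0 = -1)) := by
  have hoff : ∀ x ∈ Ioo (-1 : ℝ) 1,
      ((α 0 0 * α 1 0 : ℤ) : ℝ) * (1 - x) + ((α 0 1 * α 1 1 : ℤ) : ℝ) * (1 + x) = 0 := by
    intro x hx
    have hentry := hdiag x hx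
    rw [gramE_zero_one] at hentry
    exact (mul_eq_zero.mp hentry).resolve_left (by positivity)
  obtain ⟨h₀, h₁⟩ := eq_zero_of_affine_eq_zero_on_Ioo hoff
  simpa only [Int.isUnit_iff] using
    fin_two_signed_perm_of_isUnit_det (Int.isUnit_iff.mpr hunimod) (by exact_mod_cast h₀)
      (by exact_mod_cast h₁)

/-- Rigidity: if an integer unimodular change of basis `α` keeps the Gram matrix
`α σ(x) αᵗ` diagonal for all `x ∈ (-1,1)` and makes
`± log((ασαᵗ)₀₀/(ασαᵗ)₁₁) + log((1+x)/(1-x))` constant in `x`, then `α` is, up to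
signs and a swap, the identity; i.e. no nontrivial integral unimodular change of
basis is compatible with these conditions. -/
theorem orbit_space_rigidity (r : ℝ) (hr : 0 < r) (α : Matrix (Fin 2) (Fin 2) ℤ)
    (hunimod : α.det = 1 ∨ α.det = -1)
    (hdiag : ∀ x ∈ Ioo (-1 : ℝ) 1, gramE r α x 0 1 = 0)
    (hconst : ∃ ε : ℝ, (ε = 1 ∨ ε = -1) ∧ ∃ c : ℝ, ∀ x ∈ Ioo (-1 : ℝ) 1,
      ε * Real.log (gramE r α x 0 0 / gramE r α x 1 1) +
        Real.log ((1 + x) / (1 - x)) = c) :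
    (α 0 1 = 0 ∧ α 1 0 = 0 ∧ (α 0 0 = 1 ∨ α 0 0 = -1) ∧ (α 1 1 = 1 ∨ α 1 1 = -1)) ∨
    (α 0 0 = 0 ∧ α 1 1 = 0 ∧ (α 0 1 = 1 ∨ α 0 1 = -1) ∧ (α 1 0 = 1 ∨ α 1 0 = -1)) :=
  orbit_space_rigidity_general r hr α hunimod hdiag
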